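/- arXiv:2104.09750 — 5 statements merged into one kernel-verified Lean document; each statement's English description precedes it below -/
import Mathlib

section
/- Let Z be a nonempty set, K a positive integer, f : Z → ℝ, c : Z → ℝ^K, b ∈ ℝ^K with b_k ≥ 0 for all k, α ∈ ℝ^K with α_k ≤ 1 for all k, and λ ∈ ℝ^K. Suppose z* ∈ Z attains the supremum, i.e. f(z*) − λ·c(z*) = sup_{z∈Z}(f(z) − λ·c(z)), and that φ(λ') := sup_{z∈Z}(f(z) − λ'·c(z)) is finite for every λ' ∈ ℝ^K. Define g̃ ∈ ℝ^K coordinatewise by g̃_k = −c_k(z*) + b_k·(1 if λ_k ≥ 0, α_k if λ_k < 0). Then g̃ is a subgradient of the function λ' ↦ φ(λ') + p(λ') at λ, where p(λ') = Σ_{k=1}^K b_k·(max(λ'_k, 0) − α_k·max(−λ'_k, 0)); that is, for all λ' ∈ ℝ^K, φ(λ') + p(λ') ≥ φ(λ) + p(λ) + g̃·(λ' − λ). -/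
/-- The stochastic subgradient estimate `g̃_k = −c_k(z*) + b_k·(1 if λ_k ≥ 0, α_k if λ_k < 0)`
is a subgradient of `λ' ↦ φ(λ') + p(λ')` at `λ`, where `z*` attains the supremum defining `φ(λ)`. -/
theorem stmt3 (K : ℕ) (hK : 0 < K) (Z : Type*) [Nonempty Z]
    (f : Z → ℝ) (c : Z → Fin K → ℝ)
    (b α : Fin K → ℝ) (hb : ∀ k, 0 ≤ b k) (hα : ∀ k, α k ≤ 1)
    (lam : Fin K → ℝ)
    (φ : (Fin K → ℝ) → ℝ)
    (hφ : ∀ lam' : Fin K → ℝ,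
      IsLUB (Set.range fun z => f z - ∑ k, lam' k * c z k) (φ lam'))
    (zstar : Z)
    (hz : f zstar - ∑ k, lam k * c zstar k = φ lam)
    (p : (Fin K → ℝ) → ℝ)
    (hp : ∀ lam', p lam' = ∑ k, b k * (max (lam' k) 0 - α k * max (-lam' k) 0))
    (gt : Fin K → ℝ)
    (hgt : ∀ k, gt k = -(c zstar k) + b k * (if 0 ≤ lam k then 1 else α k)) :
    ∀ lam' : Fin K → ℝ,
      φ lam' + p lam' ≥ φ lam + p lam + ∑ k, gt k * (lam' k - lam k) := by
  intro lam'
  have h1 : f zstar - ∑ k, lam' k * c zstar k ≤ φ lam' :=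
    (hφ lam').1 ⟨zstar, rfl⟩
  have hsum : ∑ k, (b k * (max (lam k) 0 - α k * max (-lam k) 0)
        + b k * (if 0 ≤ lam k then (1:ℝ) else α k) * (lam' k - lam k))
      ≤ ∑ k, b k * (max (lam' k) 0 - α k * max (-lam' k) 0) := by
    apply Finset.sum_le_sum
    intro k _
    have hbk := hb k
    have hak := hα k
    rcases le_or_gt 0 (lam k) with h | h <;>
      rcases le_or_gt 0 (lam' k) with h' | h'
    · rw [if_pos h, max_eq_left h, max_eq_right (by linarith),
        max_eq_left h', max_eq_right (by linarith)]
      nlinarith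
    · rw [if_pos h, max_eq_left h, max_eq_right (by linarith),
        max_eq_right h'.le, max_eq_left (by linarith)]
      nlinarith [mul_nonneg (mul_nonneg hbk (sub_nonneg.mpr hak)) (neg_nonneg.mpr h'.le)]
    · rw [if_neg (not_le.mpr h), max_eq_right h.le, max_eq_left (by linarith),
        max_eq_left h', max_eq_right (by linarith)]
      nlinarith [mul_nonneg (mul_nonneg hbk (sub_nonneg.mpr hak)) h']
    · rw [if_neg (not_le.mpr h), max_eq_right h.le, max_eq_left (by linarith),
        max_eq_right h'.le, max_eq_left (by linarith)]
      nlinarith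
  have key : ∑ k, gt k * (lam' k - lam k)
      = ((∑ k, lam k * c zstar k) - ∑ k, lam' k * c zstar k)
        + ∑ k, b k * (if 0 ≤ lam k then (1:ℝ) else α k) * (lam' k - lam k) := by
    rw [← Finset.sum_sub_distrib, ← Finset.sum_add_distrib]
    apply Finset.sum_congr rfl
    intro k _
    rw [hgt k]
    ring
  rw [hp lam', hp lam, Finset.sum_add_distrib] at *
  linarith
end

section
/- Fix a positive integer K, a positive integer T, b ∈ ℝ^K with b_k ≥ 0 for all k, an index set I ⊆ {1,…,K} (the coordinates without lower-bound constraints), and α_k ∈ [−1,1) for each k ∉ I. Define Λ := {λ ∈ ℝ^K : λ_k ≥ 0 for all k ∈ I} and the penalty function p : Λ → ℝ by p(λ) = Σ_{k∈I} b_k·max(λ_k,0) + Σ_{k∉I} b_k·(max(λ_k,0) − α_k·max(−λ_k,0)). Let Z be a nonempty set and for each t ∈ {1,…,T} let f_t : Z → ℝ and c_t : Z → ℝ^K. Let λ ∈ Λ be such that φ_t(λ) := sup_{z∈Z}(f_t(z) − λ·c_t(z)) is finite for each t. Suppose z^1, …, z^T ∈ Z satisfy: for all k, Σ_{t=1}^T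 c_{t,k}(z^t) ≤ T·b_k, and for all k ∉ I, T·α_k·b_k ≤ Σ_{t=1}^T c_{t,k}(z^t). Then Σ_{t=1}^T f_t(z^t) ≤ Σ_{t=1}^T φ_t(λ) + T·p(λ). -/
/-- Realization-wise weak duality (Proposition 1, γ = 0 case): any decision sequence
`z^1, …, z^T` feasible for the lower and upper cost constraints satisfies
`Σ_t f_t(z^t) ≤ Σ_t φ_t(λ) + T·p(λ)`, where `φ_t(λ) = sup_z (f_t(z) − λ·c_t(z))`. -/
theorem stmt6 (K T : ℕ) (hK : 0 < K) (hT : 0 < T)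
    (b : Fin K → ℝ) (hb : ∀ k, 0 ≤ b k)
    (I : Finset (Fin K)) (α : Fin K → ℝ)
    (hα : ∀ k ∉ I, -1 ≤ α k ∧ α k < 1)
    (p : (Fin K → ℝ) → ℝ)
    (hp : ∀ lam, p lam = (∑ k ∈ I, b k * max (lam k) 0)
        + ∑ k ∈ Iᶜ, b k * (max (lam k) 0 - α k * max (-lam k) 0))
    (Z : Type*) [Nonempty Z]
    (f : Fin T → Z → ℝ) (c : Fin T → Z → Fin K → ℝ)
    (lam : Fin K → ℝ) (hlam : ∀ k ∈ I, 0 ≤ lam k)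
    (φ : Fin T → ℝ)
    (hφ : ∀ t, IsLUB (Set.range fun z => f t z - ∑ k, lam k * c t z k) (φ t))
    (zs : Fin T → Z)
    (hub : ∀ k, (∑ t, c t (zs t) k) ≤ (T : ℝ) * b k)
    (hlb : ∀ k ∉ I, (T : ℝ) * α k * b k ≤ ∑ t, c t (zs t) k) :
    ∑ t, f t (zs t) ≤ (∑ t, φ t) + (T : ℝ) * p lam := by
  have h1 : ∀ t, f t (zs t) ≤ φ t + ∑ k, lam k * c t (zs t) k := by
    intro t
    have := (hφ t).1 (Set.mem_range_self (zs t))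
    linarith
  have h2 : ∑ t, f t (zs t) ≤ (∑ t, φ t) + ∑ k, lam k * ∑ t, c t (zs t) k := by
    calc ∑ t, f t (zs t) ≤ ∑ t, (φ t + ∑ k, lam k * c t (zs t) k) :=
          Finset.sum_le_sum fun t _ => h1 t
      _ = (∑ t, φ t) + ∑ k, lam k * ∑ t, c t (zs t) k := by
          rw [Finset.sum_add_distrib, Finset.sum_comm]
          simp [Finset.mul_sum]
  refine h2.trans ?_
  have hsplit : ∑ k, lam k * ∑ t, c t (zs t) k
      = (∑ k ∈ I, lam k * ∑ t, c t (zs t) k)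
        + ∑ k ∈ Iᶜ, lam k * ∑ t, c t (zs t) k := by
    rw [Finset.sum_add_sum_compl]
  have hA : ∑ k ∈ I, lam k * ∑ t, c t (zs t) k
      ≤ ∑ k ∈ I, (T : ℝ) * (b k * max (lam k) 0) := by
    refine Finset.sum_le_sum fun k hk => ?_
    have hl := hlam k hk
    have := hub k
    rw [max_eq_left hl]
    nlinarith [hb k]
  have hB : ∑ k ∈ Iᶜ, lam k * ∑ t, c t (zs t) k
      ≤ ∑ k ∈ Iᶜ, (T : ℝ) * (b k * (max (lam k) 0 - α k * max (-lam k) 0)) := by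
    refine Finset.sum_le_sum fun k hk => ?_
    have hk' : k ∉ I := Finset.mem_compl.mp hk
    have h1 := hub k
    have h2 := hlb k hk'
    rcases le_or_gt 0 (lam k) with h | h
    · rw [max_eq_left h, max_eq_right (by linarith)]
      nlinarith [hb k]
    · rw [max_eq_right h.le, max_eq_left (by linarith)]
      nlinarith [hb k]
  rw [hp lam, mul_add, Finset.mul_sum, Finset.mul_sum, hsplit]
  linarith
end

section
/- Fix a positive integer K, a positive integer T, b ∈ ℝ^K with b_k ≥ 0 for all k, an index set I ⊆ {1,…,K} (the coordinates without lower-bound constraints), and α_k ∈ [−1,1) for each k ∉ I. Define Λ := {λ ∈ ℝ^K : λ_k ≥ 0 for all k ∈ I} and the penalty function p : Λ → ℝ by p(λ) = Σ_{k∈I} b_k·max(λ_k,0) + Σ_{k∉I} b_k·(max(λ_k,0) − α_k·max(−λ_k,0)). Let (W, 𝒜, μ) be a probability space, Z a nonempty set, f : Z × W → ℝ and c : Z × W → ℝ^K. Fix γ ∈ [0,1], λ ∈ Λ, arrivals w^1, …, w^T ∈ W, and decisions z^1, …, z^T ∈ Z. Assume: (i) φ(λ, w) := sup_{z∈Z}(f(z,w)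 − λ·c(z,w)) is finite for every w and w ↦ φ(λ, w) is integrable; (ii) for each t, the functions w ↦ f(z^t, w) and w ↦ c_k(z^t, w) are integrable; (iii) the feasibility constraints hold: for all k, Σ_{t=1}^T [(1−γ)·c_k(z^t, w^t) + γ·∫ c_k(z^t, w) dμ(w)] ≤ T·b_k, and for all k ∉ I, T·α_k·b_k ≤ Σ_{t=1}^T [(1−γ)·c_k(z^t, w^t) + γ·∫ c_k(z^t, w) dμ(w)]. Then Σ_{t=1}^T [(1−γ)·f(z^t, w^t) + γ·∫ f(z^t, w) dμ(w)] ≤ (1−γ)·Σ_{t=1}^T φ(λ, w^t) + γ·T·∫ φ(λ, w) dμ(w) + T·p(λ). -/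
open MeasureTheory

/-- Realization-wise weak duality for the γ-interpolated problem (Proposition 1 of the paper):
the γ-interpolated revenue of any γ-feasible decision sequence is bounded by
`(1−γ)·Σ_t φ(λ, w^t) + γ·T·∫ φ(λ, w) dμ + T·p(λ)`. -/
theorem stmt7 (K T : ℕ) (hK : 0 < K) (hT : 0 < T)
    (b : Fin K → ℝ) (hb : ∀ k, 0 ≤ b k)
    (I : Finset (Fin K)) (α : Fin K → ℝ)
    (hα : ∀ k ∉ I, -1 ≤ α k ∧ α k < 1)
    (p : (Fin K → ℝ) → ℝ)
    (hp : ∀ lam, p lam = (∑ k ∈ I, b k * max (lam k) 0)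
        + ∑ k ∈ Iᶜ, b k * (max (lam k) 0 - α k * max (-lam k) 0))
    (W : Type*) [MeasurableSpace W] (μ : Measure W) [IsProbabilityMeasure μ]
    (Z : Type*) [Nonempty Z]
    (f : Z → W → ℝ) (c : Z → W → Fin K → ℝ)
    (γ : ℝ) (hγ : γ ∈ Set.Icc (0 : ℝ) 1)
    (lam : Fin K → ℝ) (hlam : ∀ k ∈ I, 0 ≤ lam k)
    (ws : Fin T → W) (zs : Fin T → Z)
    (φ : W → ℝ)
    (hφ : ∀ w, IsLUB (Set.range fun z => f z w - ∑ k, lam k * c z w k) (φ w))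
    (hφint : Integrable φ μ)
    (hfint : ∀ t, Integrable (fun w => f (zs t) w) μ)
    (hcint : ∀ t k, Integrable (fun w => c (zs t) w k) μ)
    (hub : ∀ k,
      (∑ t, ((1 - γ) * c (zs t) (ws t) k + γ * ∫ w, c (zs t) w k ∂μ)) ≤ (T : ℝ) * b k)
    (hlb : ∀ k ∉ I, (T : ℝ) * α k * b k ≤
      ∑ t, ((1 - γ) * c (zs t) (ws t) k + γ * ∫ w, c (zs t) w k ∂μ)) :
    ∑ t, ((1 - γ) * f (zs t) (ws t) + γ * ∫ w, f (zs t) w ∂μ)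
      ≤ (1 - γ) * (∑ t, φ (ws t)) + γ * (T : ℝ) * (∫ w, φ w ∂μ) + (T : ℝ) * p lam := by
  have hγ0 : 0 ≤ 1 - γ := by linarith [hγ.2]
  have hγ1 : 0 ≤ γ := hγ.1
  have hpt : ∀ (z : Z) (w : W), f z w ≤ φ w + ∑ k, lam k * c z w k := by
    intro z w
    have := (hφ w).1 ⟨z, rfl⟩
    simp only at this
    linarith
  have hsint : ∀ t, Integrable (fun w => ∑ k, lam k * c (zs t) w k) μ := fun t =>
    integrable_finset_sum _ fun k _ => (hcint t k).const_mul _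
  have hint : ∀ t, ∫ w, f (zs t) w ∂μ ≤ ∫ w, φ w ∂μ + ∑ k, lam k * ∫ w, c (zs t) w k ∂μ := by
    intro t
    calc ∫ w, f (zs t) w ∂μ ≤ ∫ w, (φ w + ∑ k, lam k * c (zs t) w k) ∂μ :=
        integral_mono (hfint t) (hφint.add (hsint t)) (fun w => hpt (zs t) w)
      _ = ∫ w, φ w ∂μ + ∑ k, lam k * ∫ w, c (zs t) w k ∂μ := by
        rw [integral_add hφint (hsint t), integral_finset_sum _ (fun k _ => (hcint t k).const_mul _)]
        congr 1
        exact Finset.sum_congr rfl fun k _ => integral_const_mul _ _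
  set S : Fin K → ℝ := fun k => ∑ t, ((1 - γ) * c (zs t) (ws t) k + γ * ∫ w, c (zs t) w k ∂μ)
    with hS
  have step1 : ∑ t, ((1 - γ) * f (zs t) (ws t) + γ * ∫ w, f (zs t) w ∂μ)
      ≤ (1 - γ) * (∑ t, φ (ws t)) + γ * (T : ℝ) * (∫ w, φ w ∂μ) + ∑ k, lam k * S k := by
    have hterm : ∀ t : Fin T, (1 - γ) * f (zs t) (ws t) + γ * ∫ w, f (zs t) w ∂μ
        ≤ (1 - γ) * φ (ws t) + γ * ∫ w, φ w ∂μ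
          + ∑ k, lam k * ((1 - γ) * c (zs t) (ws t) k + γ * ∫ w, c (zs t) w k ∂μ) := by
      intro t
      have h1 := hpt (zs t) (ws t)
      have h2 := hint t
      have e : ∑ k, lam k * ((1 - γ) * c (zs t) (ws t) k + γ * ∫ w, c (zs t) w k ∂μ)
          = (1 - γ) * (∑ k, lam k * c (zs t) (ws t) k)
            + γ * (∑ k, lam k * ∫ w, c (zs t) w k ∂μ) := by
        rw [Finset.mul_sum, Finset.mul_sum, ← Finset.sum_add_distrib]
        exact Finset.sum_congr rfl fun k _ => by ring
      rw [e]
      nlinarith [mul_le_mul_of_nonneg_left h1 hγ0, mul_le_mul_of_nonneg_left h2 hγ1]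
    calc ∑ t, ((1 - γ) * f (zs t) (ws t) + γ * ∫ w, f (zs t) w ∂μ)
        ≤ ∑ t, ((1 - γ) * φ (ws t) + γ * ∫ w, φ w ∂μ
          + ∑ k, lam k * ((1 - γ) * c (zs t) (ws t) k + γ * ∫ w, c (zs t) w k ∂μ)) :=
        Finset.sum_le_sum fun t _ => hterm t
      _ = (1 - γ) * (∑ t, φ (ws t)) + γ * (T : ℝ) * (∫ w, φ w ∂μ) + ∑ k, lam k * S k := by
        rw [Finset.sum_add_distrib, Finset.sum_add_distrib, ← Finset.mul_sum,
          Finset.sum_const, Finset.card_fin, Finset.sum_comm]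
        simp only [hS, Finset.mul_sum, nsmul_eq_mul]
        ring
  have step2 : ∑ k, lam k * S k ≤ (T : ℝ) * p lam := by
    rw [hp, mul_add, Finset.mul_sum, Finset.mul_sum,
      ← Finset.sum_add_sum_compl I (fun k => lam k * S k)]
    apply add_le_add
    · apply Finset.sum_le_sum
      intro k hk
      have hl := hlam k hk
      rw [max_eq_left hl]
      calc lam k * S k ≤ lam k * ((T : ℝ) * b k) := mul_le_mul_of_nonneg_left (hub k) hl
        _ = (T : ℝ) * (b k * lam k) := by ring
    · apply Finset.sum_le_sum
      intro k hk
      have hk' : k ∉ I := Finset.mem_compl.mp hk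
      rcases le_or_gt 0 (lam k) with h | h
      · rw [max_eq_left h, max_eq_right (neg_nonpos.mpr h)]
        calc lam k * S k ≤ lam k * ((T : ℝ) * b k) := mul_le_mul_of_nonneg_left (hub k) h
          _ = (T : ℝ) * (b k * (lam k - α k * 0)) := by ring
      · rw [max_eq_right h.le, max_eq_left (by linarith : (0:ℝ) ≤ -lam k)]
        calc lam k * S k ≤ lam k * ((T : ℝ) * α k * b k) :=
            mul_le_mul_of_nonpos_left (hlb k hk') h.le
          _ = (T : ℝ) * (b k * (0 - α k * -lam k)) := by ring
  linarith
end

section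
/- Fix a positive integer K, b ∈ ℝ^K with b_k ≥ 0 for all k, an index set I ⊆ {1,…,K} (the coordinates without lower-bound constraints), and α_k ∈ [−1,1) for each k ∉ I. Define Λ := {λ ∈ ℝ^K : λ_k ≥ 0 for all k ∈ I} and the penalty function p : Λ → ℝ by p(λ) = Σ_{k∈I} b_k·max(λ_k,0) + Σ_{k∉I} b_k·(max(λ_k,0) − α_k·max(−λ_k,0)). Let (W, 𝒜, μ) be a probability space, Z a nonempty set, f : Z × W → ℝ and c : Z × W → ℝ^K with |f(z,w)| ≤ f̄ for all (z,w). Fix λ ∈ Λ and δ ≥ 0. Assume: (a) there is a map z_λ : W → Z with f(z_λ(w), w) − λ·c(z_λ(w), w) = sup_{z∈Z}(f(z,w) − λ·c(z,w)) =: φ(λ, w) for every w, and the functions w ↦ φ(λ, w) and w ↦ f(z_λ(w), w) are integrable; (b) there is a map ẑ : W → Z with w ↦ f(ẑ(w), w) and w ↦ c_k(ẑ(w), w) integrable for every k, such that b_k − ∫ c_k(ẑ(w), w) dμ(w) ≥ δ for every k, and ∫ c_k(ẑ(w), w) dμ(w) − α_k·b_k ≥ δ for every k ∉ I. Then ∫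 φ(λ, w) dμ(w) + p(λ) − ∫ f(z_λ(w), w) dμ(w) ≥ δ·‖λ‖₁ − 2·f̄. -/
open MeasureTheory

/-- Slater-type key inequality: if a decision rule `ẑ` has slack `δ` in all expected lower and
upper cost constraints, then `∫ φ(λ,w) dμ + p(λ) − ∫ f(z_λ(w),w) dμ ≥ δ·‖λ‖₁ − 2·f̄`. -/
theorem stmt10 (K : ℕ) (hK : 0 < K)
    (b : Fin K → ℝ) (hb : ∀ k, 0 ≤ b k)
    (I : Finset (Fin K)) (α : Fin K → ℝ)
    (hα : ∀ k ∉ I, -1 ≤ α k ∧ α k < 1)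
    (p : (Fin K → ℝ) → ℝ)
    (hp : ∀ lam, p lam = (∑ k ∈ I, b k * max (lam k) 0)
        + ∑ k ∈ Iᶜ, b k * (max (lam k) 0 - α k * max (-lam k) 0))
    (W : Type*) [MeasurableSpace W] (μ : Measure W) [IsProbabilityMeasure μ]
    (Z : Type*) [Nonempty Z]
    (f : Z → W → ℝ) (c : Z → W → Fin K → ℝ)
    (fbar : ℝ) (hfbar : ∀ z w, |f z w| ≤ fbar)
    (lam : Fin K → ℝ) (hlam : ∀ k ∈ I, 0 ≤ lam k)
    (δ : ℝ) (hδ : 0 ≤ δ)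
    (zlam : W → Z) (φ : W → ℝ)
    (hφval : ∀ w, φ w = f (zlam w) w - ∑ k, lam k * c (zlam w) w k)
    (hφsup : ∀ w z, f z w - (∑ k, lam k * c z w k) ≤ φ w)
    (hφint : Integrable φ μ)
    (hfzlamint : Integrable (fun w => f (zlam w) w) μ)
    (zhat : W → Z)
    (hfhint : Integrable (fun w => f (zhat w) w) μ)
    (hchint : ∀ k, Integrable (fun w => c (zhat w) w k) μ)
    (hslackub : ∀ k, δ ≤ b k - ∫ w, c (zhat w) w k ∂μ)
    (hslacklb : ∀ k ∉ I, δ ≤ (∫ w, c (zhat w) w k ∂μ) - α k * b k) :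
    (∫ w, φ w ∂μ) + p lam - (∫ w, f (zlam w) w ∂μ) ≥ δ * (∑ k, |lam k|) - 2 * fbar := by
  set m : Fin K → ℝ := fun k => ∫ w, c (zhat w) w k ∂μ with hm
  have hint2 : Integrable (fun w => ∑ k, lam k * c (zhat w) w k) μ :=
    integrable_finset_sum _ fun k _ => (hchint k).const_mul _
  have hφge : ∫ w, (f (zhat w) w - ∑ k, lam k * c (zhat w) w k) ∂μ ≤ ∫ w, φ w ∂μ :=
    integral_mono (hfhint.sub hint2) hφint (fun w => hφsup w (zhat w))
  have hsplit : ∫ w, (f (zhat w) w - ∑ k, lam k * c (zhat w) w k) ∂μ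
      = (∫ w, f (zhat w) w ∂μ) - ∑ k, lam k * m k := by
    rw [integral_sub hfhint hint2, integral_finset_sum _ fun k _ => (hchint k).const_mul _]
    simp [integral_const_mul, hm]
  -- bounds on integrals of f
  have habs1 : |∫ w, f (zhat w) w ∂μ| ≤ fbar := by
    calc |∫ w, f (zhat w) w ∂μ| ≤ ∫ w, |f (zhat w) w| ∂μ := (by simpa [Real.norm_eq_abs] using norm_integral_le_integral_norm (μ := μ) (f := fun w => f (zhat w) w))
    _ ≤ ∫ _w, fbar ∂μ := integral_mono hfhint.abs (integrable_const _) (fun w => hfbar _ w)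
    _ = fbar := by simp
  have habs2 : |∫ w, f (zlam w) w ∂μ| ≤ fbar := by
    calc |∫ w, f (zlam w) w ∂μ| ≤ ∫ w, |f (zlam w) w| ∂μ := (by simpa [Real.norm_eq_abs] using norm_integral_le_integral_norm (μ := μ) (f := fun w => f (zlam w) w))
    _ ≤ ∫ _w, fbar ∂μ := integral_mono hfzlamint.abs (integrable_const _) (fun w => hfbar _ w)
    _ = fbar := by simp
  -- per coordinate bound
  have hI : ∀ k ∈ I, δ * |lam k| + lam k * m k ≤ b k * max (lam k) 0 := by
    intro k hk
    have h0 : 0 ≤ lam k := hlam k hk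
    rw [max_eq_left h0, abs_of_nonneg h0]
    nlinarith [hslackub k]
  have hIc : ∀ k ∈ Iᶜ, δ * |lam k| + lam k * m k
      ≤ b k * (max (lam k) 0 - α k * max (-lam k) 0) := by
    intro k hk
    rw [Finset.mem_compl] at hk
    rcases le_or_gt 0 (lam k) with h0 | h0
    · rw [max_eq_left h0, abs_of_nonneg h0, max_eq_right (neg_nonpos_of_nonneg h0)]
      nlinarith [hslackub k]
    · rw [max_eq_right h0.le, abs_of_neg h0, max_eq_left (neg_nonneg_of_nonpos h0.le)]
      nlinarith [hslacklb k hk]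
  have hpsum : δ * (∑ k, |lam k|) + ∑ k, lam k * m k ≤ p lam := by
    rw [hp lam, Finset.mul_sum, ← Finset.sum_add_sum_compl I (fun k => δ * |lam k|),
      ← Finset.sum_add_sum_compl I (fun k => lam k * m k)]
    have := Finset.sum_le_sum hI
    have := Finset.sum_le_sum hIc
    push_cast
    linarith [Finset.sum_add_distrib (s := I) (f := fun k => δ * |lam k|) (g := fun k => lam k * m k),
      Finset.sum_add_distrib (s := Iᶜ) (f := fun k => δ * |lam k|) (g := fun k => lam k * m k)]
  have h1 := abs_le.mp habs1
  have h2 := abs_le.mp habs2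
  linarith [hφge, hsplit.symm.le, hsplit.le]
end

section
/- Let K be a positive integer, v ∈ ℝ^K, and mp ∈ ℝ with mp ≥ 0. Let k* ∈ {1,…,K} satisfy v_{k*} = max_k v_k. Define the pair (z, x) ∈ ℝ_{≥0} × ℝ_{≥0}^K as follows: if v_{k*} ≥ 0, set z = v_{k*} and x = e_{k*} (the k*-th standard basis vector); otherwise set z = 0 and x = 0. Then for every z' ≥ 0 and every x' ∈ ℝ_{≥0}^K with Σ_{k=1}^K x'_k ≤ 1: (Σ_{k=1}^K (v_k − mp)·x'_k)·1(z' ≥ mp) ≤ (Σ_{k=1}^K (v_k − mp)·x_k)·1(z ≥ mp), where 1(·) is the indicator taking value 1 if the condition holds and 0 otherwise. -/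
/-- Correctness of the bidding subroutine (Algorithm 3): bidding the largest adjusted value
`v_{k*}` (when nonnegative) and allocating to client `k*` attains the maximum of
`(Σ_k (v_k − mp)·x'_k)·1(z' ≥ mp)` over all bids `z' ≥ 0` and allocations `x'` in the
sub-simplex, simultaneously for every highest competing bid `mp ≥ 0`. -/
theorem stmt13 (K : ℕ) (hK : 0 < K) (v : Fin K → ℝ) (mp : ℝ) (hmp : 0 ≤ mp)
    (kstar : Fin K) (hkstar : ∀ k, v k ≤ v kstar)
    (z : ℝ) (x : Fin K → ℝ)
    (hz : z = if 0 ≤ v kstar then v kstar else 0)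
    (hx : x = if 0 ≤ v kstar then (fun k => if k = kstar then (1 : ℝ) else 0)
        else (fun _ => 0)) :
    ∀ z' : ℝ, 0 ≤ z' → ∀ x' : Fin K → ℝ, (∀ k, 0 ≤ x' k) → (∑ k, x' k) ≤ 1 →
      (∑ k, (v k - mp) * x' k) * (if mp ≤ z' then (1 : ℝ) else 0)
        ≤ (∑ k, (v k - mp) * x k) * (if mp ≤ z then (1 : ℝ) else 0) := by
  intro z' hz' x' hx' hsum
  have hR : (∑ k, (v k - mp) * x k) * (if mp ≤ z then (1 : ℝ) else 0)
      = max 0 (v kstar - mp) := by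
    by_cases h : 0 ≤ v kstar
    · simp only [hx, hz, if_pos h]
      have hsum2 : (∑ k, (v k - mp) * (if k = kstar then (1 : ℝ) else 0))
          = v kstar - mp := by
        rw [Finset.sum_eq_single kstar] <;> simp +contextual
      rw [hsum2]
      by_cases h2 : mp ≤ v kstar
      · rw [if_pos h2, max_eq_right (by linarith)]; ring
      · rw [if_neg h2, max_eq_left (by linarith)]; ring
    · simp only [hx, hz, if_neg h]
      have h2 : ¬ mp ≤ (0:ℝ) ∨ mp ≤ (0:ℝ) := (em _).symm
      rw [max_eq_left (by push_neg at h; linarith)]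
      simp
  rw [hR]
  by_cases h : mp ≤ z'
  · rw [if_pos h, mul_one]
    calc (∑ k, (v k - mp) * x' k) ≤ ∑ k, max 0 (v kstar - mp) * x' k := by
          apply Finset.sum_le_sum
          intro k _
          apply mul_le_mul_of_nonneg_right _ (hx' k)
          exact le_trans (by linarith [hkstar k]) (le_max_right _ _)
      _ = max 0 (v kstar - mp) * ∑ k, x' k := by rw [Finset.mul_sum]
      _ ≤ max 0 (v kstar - mp) * 1 := by
          apply mul_le_mul_of_nonneg_left hsum (le_max_left _ _)
      _ = max 0 (v kstar - mp) := mul_one _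
  · rw [if_neg h, mul_zero]; exact le_max_left _ _
end
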